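/- Assume n is even, n ≥ 2, and a^2 ≠ c^2. Then for every nonzero periodic point X₀ of f and every integer i with 1 ≤ i ≤ e+1, the number of Y ∈ F_{q^2} that hang at depth i from X₀ equals 𝔤(n^i) − 𝔤(n^{i−1}). -/

import Mathlib

/-!
For `σ`-fixed `ζ` the map `T X = (c σX + aX)(σX - X)^k` satisfies `T (ζX) = ζ^(k+1) T X`.
Conversely, since `k` is odd, `T Y + σ (T Y) = (c - a)(σY - Y)^(k+1)` and
`T Y - σ (T Y) = (c + a)(σY + Y)(σY - Y)^k`; when `a² ≠ c²` these two identities turn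
`T Y₁ = ζ' T Y₂` into `Y₁ = ζ Y₂` with `ζ = (σY₁ - Y₁)/(σY₂ - Y₂)` fixed by `σ` and
`ζ^(k+1) = ζ'`. So the fibre of `T^[j]` over a nonzero point of its image is a coset of the
`(k+1)^j`-torsion of `F_q^×`, which has `gcd((k+1)^j, q-1)` elements. Since `f` permutes its
periodic points, `X₀` has a unique periodic preimage `P₀ ≠ 0`, and the points of the fibre of
`f^[i]` over `X₀` that do not hang from it are exactly the fibre of `f^[i-1]` over `P₀`.
-/

open Function Set Polynomial

theorem ncard_hangs_add_ncard_fiber {α : Type*} [Finite α] (f : α → α) {x₀ p₀ : α}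
    (hp₀ : p₀ ∈ periodicPts f) (hfp₀ : f p₀ = x₀) (i : ℕ) :
    {y | f^[i + 1] y = x₀ ∧ ∀ j < i + 1, f^[j] y ∉ periodicPts f}.ncard
      + {y | f^[i] y = p₀}.ncard = {y | f^[i + 1] y = x₀}.ncard := by
  have hsplit : {y | f^[i + 1] y = x₀}
      = {y | f^[i + 1] y = x₀ ∧ ∀ j < i + 1, f^[j] y ∉ periodicPts f} ∪ {y | f^[i] y = p₀} := by
    ext y
    simp only [mem_ofPred_eq, mem_union, iterate_succ_apply']
    refine ⟨fun hy => ?_, ?_⟩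
    · by_cases hper : f^[i] y ∈ periodicPts f
      · exact .inr ((bijOn_periodicPts f).injOn hper hp₀ (hy.trans hfp₀.symm))
      · refine .inl ⟨hy, fun j hj hj_per => hper ?_⟩
        rw [← Nat.sub_add_cancel (Nat.le_of_lt_succ hj), iterate_add_apply]
        exact (bijOn_periodicPts f).mapsTo.iterate _ hj_per
    · rintro (⟨hy, -⟩ | hy)
      · exact hy
      · rw [hy, hfp₀]
  have hdisj : Disjoint {y | f^[i + 1] y = x₀ ∧ ∀ j < i + 1, f^[j] y ∉ periodicPts f}
      {y | f^[i] y = p₀} :=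
    disjoint_left.mpr fun y hy hy' => hy.2 i (Nat.lt_succ_self i) (hy'.symm ▸ hp₀)
  rw [hsplit, ncard_union_eq hdisj]

section RootsOfUnity

variable {F : Type*} [Field F] [Fintype F]

theorem FiniteField.exists_isPrimitiveRoot_of_dvd {g : ℕ} (hg : g ∣ Fintype.card F - 1) :
    ∃ ζ : F, IsPrimitiveRoot ζ g := by
  classical
  obtain ⟨γ, hγ⟩ := IsCyclic.exists_ofOrder_eq_natCard (α := Fˣ)
  have hγ_prim : IsPrimitiveRoot (γ : F) (Fintype.card F - 1) := by
    rw [IsPrimitiveRoot.coe_units_iff, ← Fintype.card_units, ← Nat.card_eq_fintype_card, ← hγ]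
    exact IsPrimitiveRoot.orderOf γ
  have hcard : Fintype.card F - 1 ≠ 0 := by
    have := Fintype.one_lt_card (α := F); omega
  have hquot := Nat.div_dvd_of_dvd hg
  refine ⟨_, Nat.div_div_self hg hcard ▸ hγ_prim.pow_of_dvd ?_ hquot⟩
  exact (Nat.div_ne_zero_iff_of_dvd hg).mpr
    ⟨hcard, by rintro rfl; exact hcard (zero_dvd_iff.mp hg)⟩

theorem ncard_setOf_pow_eq_self_and_pow_eq_one {q N : ℕ} (hq : 0 < q)
    (hqF : q - 1 ∣ Fintype.card F - 1) (hN : N ≠ 0) :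
    {ζ : F | ζ ^ q = ζ ∧ ζ ^ N = 1}.ncard = N.gcd (q - 1) := by
  have hg : 0 < N.gcd (q - 1) := Nat.gcd_pos_of_pos_left _ (Nat.pos_of_ne_zero hN)
  have hset : {ζ : F | ζ ^ q = ζ ∧ ζ ^ N = 1} = nthRootsFinset (N.gcd (q - 1)) (1 : F) := by
    ext ζ
    have hq' : ζ ^ q = ζ ^ (q - 1) * ζ := by rw [← pow_succ, Nat.sub_add_cancel hq]
    simp only [mem_ofPred_eq, Finset.mem_coe, mem_nthRootsFinset hg, pow_gcd_eq_one, hq']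
    refine ⟨fun ⟨h, hN1⟩ => ⟨hN1, ?_⟩, fun ⟨hN1, h⟩ => ⟨by rw [h, one_mul], hN1⟩⟩
    have hζ : ζ ≠ 0 := by rintro rfl; simp [hN] at hN1
    exact mul_right_cancel₀ hζ (h.trans (one_mul ζ).symm)
  obtain ⟨ζ, hζ⟩ := FiniteField.exists_isPrimitiveRoot_of_dvd ((Nat.gcd_dvd_right _ _).trans hqF)
  rw [hset, ncard_coe_finset, hζ.card_nthRootsFinset]

end RootsOfUnity

section TwistedMap

variable {F : Type*} [Field F] (σ : F →+* F) (a c : F) (k : ℕ)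

def twistedMap (X : F) : F := (c * σ X + a * X) * (σ X - X) ^ k

variable {a c k}

theorem twistedMap_zero : twistedMap σ a c k 0 = 0 := by simp [twistedMap]

theorem iterate_twistedMap_zero (j : ℕ) : (twistedMap σ a c k)^[j] 0 = 0 :=
  iterate_fixed (twistedMap_zero σ) j

theorem twistedMap_mul_of_fixed {ζ : F} (hζ : σ ζ = ζ) (Y : F) :
    twistedMap σ a c k (ζ * Y) = ζ ^ (k + 1) * twistedMap σ a c k Y := by
  simp only [twistedMap, map_mul, hζ, ← mul_sub, mul_pow]
  ring

theorem iterate_twistedMap_mul_of_fixed (j : ℕ) {ζ : F} (hζ : σ ζ = ζ) (Y : F) :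
    (twistedMap σ a c k)^[j] (ζ * Y) = ζ ^ (k + 1) ^ j * (twistedMap σ a c k)^[j] Y := by
  induction j generalizing ζ Y with
  | zero => simp
  | succ j ih =>
    rw [iterate_succ_apply, iterate_succ_apply, twistedMap_mul_of_fixed σ hζ,
      ih (by rw [map_pow, hζ]), ← pow_mul, ← pow_succ']

variable {σ} (hinv : ∀ x, σ (σ x) = x) (ha : σ a = a) (hc : σ c = c) (hk : Odd k)
include hinv ha hc hk

theorem map_twistedMap (Y : F) :
    σ (twistedMap σ a c k Y) = -((c * Y + a * σ Y) * (σ Y - Y) ^ k) := by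
  simp only [twistedMap, map_mul, map_add, map_sub, map_pow, hinv, ha, hc]
  rw [← neg_sub, hk.neg_pow]
  ring

theorem twistedMap_add_map (Y : F) :
    twistedMap σ a c k Y + σ (twistedMap σ a c k Y) = (c - a) * (σ Y - Y) ^ (k + 1) := by
  rw [map_twistedMap hinv ha hc hk, twistedMap]
  ring

theorem twistedMap_sub_map (Y : F) :
    twistedMap σ a c k Y - σ (twistedMap σ a c k Y)
      = (c + a) * (σ Y + Y) * (σ Y - Y) ^ k := by
  rw [map_twistedMap hinv ha hc hk, twistedMap]
  ring

theorem eq_mul_of_twistedMap_eq_mul (h2 : (2 : F) ≠ 0) (hac : a ^ 2 ≠ c ^ 2)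
    {Y₁ Y₂ ζ' : F} (hζ' : σ ζ' = ζ') (hζ'0 : ζ' ≠ 0) (hY₂ : twistedMap σ a c k Y₂ ≠ 0)
    (h : twistedMap σ a c k Y₁ = ζ' * twistedMap σ a c k Y₂) :
    ∃ ζ, σ ζ = ζ ∧ ζ ^ (k + 1) = ζ' ∧ Y₁ = ζ * Y₂ := by
  have hca : c - a ≠ 0 := fun h0 => hac (by rw [sub_eq_zero.mp h0])
  have hca' : c + a ≠ 0 := fun h0 => hac (by rw [eq_neg_of_add_eq_zero_left h0]; ring)
  have hσh : σ (twistedMap σ a c k Y₁) = ζ' * σ (twistedMap σ a c k Y₂) := by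
    rw [h, map_mul, hζ']
  have hu : (σ Y₁ - Y₁) ^ (k + 1) = ζ' * (σ Y₂ - Y₂) ^ (k + 1) := by
    refine mul_left_cancel₀ hca ?_
    linear_combination -(twistedMap_add_map hinv ha hc hk Y₁)
      + ζ' * twistedMap_add_map hinv ha hc hk Y₂ + h + hσh
  have hv : (σ Y₁ + Y₁) * (σ Y₁ - Y₁) ^ k = ζ' * ((σ Y₂ + Y₂) * (σ Y₂ - Y₂) ^ k) := by
    refine mul_left_cancel₀ hca' ?_
    linear_combination -(twistedMap_sub_map hinv ha hc hk Y₁)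
      + ζ' * twistedMap_sub_map hinv ha hc hk Y₂ + h - hσh
  have hu₂ : σ Y₂ - Y₂ ≠ 0 := ne_zero_pow hk.pos.ne' (right_ne_zero_of_mul hY₂)
  have hu₁ : σ Y₁ - Y₁ ≠ 0 := by
    refine ne_zero_pow (Nat.succ_ne_zero k) ?_
    rw [hu]
    exact mul_ne_zero hζ'0 (pow_ne_zero _ hu₂)
  set ζ := (σ Y₁ - Y₁) / (σ Y₂ - Y₂)
  have hζu : σ Y₁ - Y₁ = ζ * (σ Y₂ - Y₂) := (div_mul_cancel₀ _ hu₂).symm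
  have hζ : σ ζ = ζ := by
    simp only [ζ, map_div₀, map_sub, hinv, ← neg_sub (σ _), neg_div_neg_eq]
  have hζk : ζ ^ (k + 1) = ζ' := by
    refine mul_right_cancel₀ (pow_ne_zero (k + 1) hu₂) ?_
    rw [← mul_pow, ← hζu, hu]
  have hζv : σ Y₁ + Y₁ = ζ * (σ Y₂ + Y₂) := by
    refine mul_right_cancel₀ (pow_ne_zero k hu₁) ?_
    rw [hv, ← hζk, hζu, mul_pow]
    ring
  refine ⟨ζ, hζ, hζk, mul_left_cancel₀ h2 ?_⟩
  linear_combination hζv - hζu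

theorem eq_mul_of_iterate_twistedMap_eq_mul (h2 : (2 : F) ≠ 0) (hac : a ^ 2 ≠ c ^ 2) (j : ℕ)
    {Y₁ Y₂ ζ' : F} (hζ' : σ ζ' = ζ') (hζ'0 : ζ' ≠ 0)
    (hY₂ : (twistedMap σ a c k)^[j] Y₂ ≠ 0)
    (h : (twistedMap σ a c k)^[j] Y₁ = ζ' * (twistedMap σ a c k)^[j] Y₂) :
    ∃ ζ, σ ζ = ζ ∧ ζ ^ (k + 1) ^ j = ζ' ∧ Y₁ = ζ * Y₂ := by
  induction j generalizing Y₁ Y₂ with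
  | zero => exact ⟨ζ', hζ', pow_one ζ', h⟩
  | succ j ih =>
    rw [iterate_succ_apply] at hY₂ h
    obtain ⟨ζ₁, hζ₁, hζ₁j, hY⟩ := ih hY₂ h
    have hζ₁0 : ζ₁ ≠ 0 := by rintro rfl; exact hζ'0 (by simp [← hζ₁j])
    have hTY₂ : twistedMap σ a c k Y₂ ≠ 0 := fun h0 => hY₂ (by rw [h0, iterate_twistedMap_zero])
    obtain ⟨ζ, hζ, hζk, hY₁⟩ :=
      eq_mul_of_twistedMap_eq_mul hinv ha hc hk h2 hac hζ₁ hζ₁0 hTY₂ hY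
    exact ⟨ζ, hζ, by rw [pow_succ', pow_mul, hζk, hζ₁j], hY₁⟩

theorem iterate_twistedMap_fiber_eq_image (h2 : (2 : F) ≠ 0) (hac : a ^ 2 ≠ c ^ 2) (j : ℕ)
    {W : F} (hW : (twistedMap σ a c k)^[j] W ≠ 0) :
    {Y | (twistedMap σ a c k)^[j] Y = (twistedMap σ a c k)^[j] W}
      = (· * W) '' {ζ | σ ζ = ζ ∧ ζ ^ (k + 1) ^ j = 1} := by
  ext Y
  constructor
  · intro hY
    obtain ⟨ζ, hζ, hζ1, rfl⟩ := eq_mul_of_iterate_twistedMap_eq_mul hinv ha hc hk h2 hac j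
      (map_one σ) one_ne_zero hW (hY.trans (one_mul _).symm)
    exact ⟨ζ, ⟨hζ, hζ1⟩, rfl⟩
  · rintro ⟨ζ, ⟨hζ, hζ1⟩, rfl⟩
    simp only [mem_ofPred_eq, iterate_twistedMap_mul_of_fixed σ j hζ, hζ1, one_mul]

end TwistedMap

theorem ncard_iterate_twistedMap_fiber {F : Type*} [Field F] [Fintype F] {q : ℕ}
    (hF : Fintype.card F = q ^ 2) {σ : F →+* F} (hσ : ∀ x, σ x = x ^ q) {a c : F} {k : ℕ}
    (ha : a ^ q = a) (hc : c ^ q = c) (hk : Odd k) (h2 : (2 : F) ≠ 0) (hac : a ^ 2 ≠ c ^ 2)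
    {Z : F} (hZ : Z ≠ 0) (hZ_per : Z ∈ periodicPts (twistedMap σ a c k)) (j : ℕ) :
    {Y | (twistedMap σ a c k)^[j] Y = Z}.ncard = ((k + 1) ^ j).gcd (q - 1) := by
  have hσσ : ∀ x, σ (σ x) = x := fun x => by
    rw [hσ, hσ, ← pow_mul, ← sq, ← hF, FiniteField.pow_card]
  have hq : 0 < q := by
    have := Fintype.one_lt_card (α := F)
    rw [hF] at this
    exact Nat.pos_of_ne_zero (by rintro rfl; simp at this)
  obtain ⟨W, -, rfl⟩ := (bijOn_periodicPts _).surjOn.iterate j hZ_per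
  have hW : W ≠ 0 := by rintro rfl; exact hZ (iterate_twistedMap_zero σ j)
  rw [iterate_twistedMap_fiber_eq_image hσσ ((hσ a).trans ha) ((hσ c).trans hc) hk h2 hac j hZ,
    ncard_image_of_injective _ (mul_left_injective₀ hW)]
  simp only [hσ]
  exact ncard_setOf_pow_eq_self_and_pow_eq_one hq (hF ▸ Nat.sub_one_dvd_pow_sub_one q 2)
    (pow_ne_zero _ k.succ_ne_zero)

theorem stmt_11_general (p m q : ℕ) (hp : p.Prime) (hpodd : p ≠ 2) (hq : q = p ^ m)
    (F : Type*) [Field F] [Fintype F] (hF : Fintype.card F = q ^ 2)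
    (a c : F) (ha : a ^ q = a) (hc : c ^ q = c)
    (n : ℕ) (hn2 : 2 ≤ n) (hneven : Even n)
    (hac : a ^ 2 ≠ c ^ 2)
    (f : F → F) (hf : ∀ X, f X = (c * X ^ q + a * X) * (X ^ q - X) ^ (n - 1))
    (e : ℕ)
    (Periodic : F → Prop) (hPer : ∀ X : F, Periodic X ↔ ∃ k : ℕ, 1 ≤ k ∧ f^[k] X = X)
    (Hangs : ℕ → F → F → Prop)
    (hHangs : ∀ (k : ℕ) (Y X₀ : F),
      Hangs k Y X₀ ↔ f^[k] Y = X₀ ∧ ∀ i : ℕ, i < k → ¬ Periodic (f^[i] Y)) :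
    ∀ X₀ : F, X₀ ≠ 0 → Periodic X₀ →
      ∀ i : ℕ, 1 ≤ i → i ≤ e + 1 →
        ({Y : F | Hangs i Y X₀}.ncard : ℤ) =
          (Nat.gcd (n ^ i) (q - 1) : ℤ) - Nat.gcd (n ^ (i - 1)) (q - 1) := by
  have : Fact p.Prime := ⟨hp⟩
  have : CharP F p := charP_of_card_eq_prime_pow (hF.trans (by rw [hq, ← pow_mul]))
  have hσ : ∀ x : F, iterateFrobenius F p m x = x ^ q := fun x => by
    rw [iterateFrobenius_def, hq]
  have h2 : (2 : F) ≠ 0 := by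
    simpa using (CharP.cast_eq_zero_iff F p 2).not.mpr
      fun h => hpodd ((Nat.prime_dvd_prime_iff_eq hp Nat.prime_two).mp h)
  obtain ⟨k, rfl⟩ : ∃ k, n = k + 1 := ⟨n - 1, by omega⟩
  have hk : Odd k := by simpa [Nat.even_add_one] using hneven
  obtain rfl : f = twistedMap (iterateFrobenius F p m) a c k := funext fun X => by
    rw [hf, twistedMap, hσ, Nat.add_sub_cancel]
  have hPer' : ∀ X, Periodic X ↔ X ∈ periodicPts _ := fun X => (hPer X).trans Iff.rfl
  intro X₀ hX₀ hX₀_per i hi _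
  obtain ⟨i, rfl⟩ : ∃ i', i = i' + 1 := ⟨i - 1, by omega⟩
  rw [hPer'] at hX₀_per
  obtain ⟨P₀, hP₀_per, hfP₀⟩ := (bijOn_periodicPts _).surjOn hX₀_per
  have hP₀ : P₀ ≠ 0 := by rintro rfl; exact hX₀ (hfP₀ ▸ twistedMap_zero _)
  have hcount := ncard_hangs_add_ncard_fiber _ hP₀_per hfP₀ i
  rw [ncard_iterate_twistedMap_fiber hF hσ ha hc hk h2 hac hX₀ hX₀_per,
    ncard_iterate_twistedMap_fiber hF hσ ha hc hk h2 hac hP₀ hP₀_per] at hcount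
  simp only [hHangs, hPer', Nat.add_sub_cancel]
  omega

/-- `n` even, `n ≥ 2`, `a² ≠ c²`. For every nonzero periodic point `X₀`
and every `1 ≤ i ≤ e+1`, the number of `Y` hanging at depth `i` from `X₀` equals
`𝔤(nⁱ) - 𝔤(n^{i-1})`. -/
theorem stmt_11 (p m q : ℕ) (hp : p.Prime) (hpodd : p ≠ 2) (hm : 0 < m) (hq : q = p ^ m)
    (F : Type*) [Field F] [Fintype F] (hF : Fintype.card F = q ^ 2)
    (a c : F) (ha : a ^ q = a) (hc : c ^ q = c)
    (n : ℕ) (hn2 : 2 ≤ n) (hneven : Even n)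
    (hac : a ^ 2 ≠ c ^ 2)
    (f : F → F) (hf : ∀ X, f X = (c * X ^ q + a * X) * (X ^ q - X) ^ (n - 1))
    (r s : ℕ) (hrdvd : r ∣ q - 1) (hrcop : Nat.Coprime r n)
    (hrmax : ∀ r' : ℕ, r' ∣ q - 1 → Nat.Coprime r' n → r' ≤ r)
    (hsr : q - 1 = s * r)
    (e : ℕ) (he : Nat.gcd (n ^ e) (q - 1) < s)
    (hemax : ∀ e' : ℕ, Nat.gcd (n ^ e') (q - 1) < s → e' ≤ e)
    (Periodic : F → Prop) (hPer : ∀ X : F, Periodic X ↔ ∃ k : ℕ, 1 ≤ k ∧ f^[k] X = X)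
    (Hangs : ℕ → F → F → Prop)
    (hHangs : ∀ (k : ℕ) (Y X₀ : F),
      Hangs k Y X₀ ↔ f^[k] Y = X₀ ∧ ∀ i : ℕ, i < k → ¬ Periodic (f^[i] Y)) :
    ∀ X₀ : F, X₀ ≠ 0 → Periodic X₀ →
      ∀ i : ℕ, 1 ≤ i → i ≤ e + 1 →
        ({Y : F | Hangs i Y X₀}.ncard : ℤ) =
          (Nat.gcd (n ^ i) (q - 1) : ℤ) - Nat.gcd (n ^ (i - 1)) (q - 1) :=
  stmt_11_general p m q hp hpodd hq F hF a c ha hc n hn2 hneven hac f hf e Periodic hPer Hangs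
    hHangs
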